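/- arXiv:1804.10457 — 2 statements merged into one kernel-verified Lean document; each statement's English description precedes it below -/
import Mathlib

section
/- Let P₁,…,Pₙ be pairwise distinct pure qubit states (rank-one projections on ℂ²) with n ≥ 2. Then P₁,…,Pₙ are antidistinguishable if and only if there exist positive real numbers t₁,…,tₙ such that ∑_{j=1}^n t_j P_j = I. -/
open Matrix BigOperators
open scoped ComplexOrder

/-- A pure qubit state: a rank-one orthogonal projection on ℂ². -/
def IsPureState (P : Matrix (Fin 2) (Fin 2) ℂ) : Prop :=
  P.IsHermitian ∧ P * P = P ∧ P.trace = 1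

/-- A POVM on ℂ² with outcomes 1,…,n. -/
def IsPOVM {n : ℕ} (M : Fin n → Matrix (Fin 2) (Fin 2) ℂ) : Prop :=
  (∀ j, (M j).PosSemidef) ∧ ∑ j, M j = 1

/-- Qubit states are antidistinguishable if some POVM excludes each with certainty,
with every outcome occurring for at least one state. -/
def Antidistinguishable {n : ℕ} (ρ : Fin n → Matrix (Fin 2) (Fin 2) ℂ) : Prop :=
  ∃ M : Fin n → Matrix (Fin 2) (Fin 2) ℂ, IsPOVM M ∧
    ∀ j, (ρ j * M j).trace = 0 ∧ ∑ k, (ρ k * M j).trace ≠ 0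

/-!
For a pure qubit state `P`, the complement `1 - P` is again pure, and in dimension two
`P * M * P = tr (P * M) • P` (a polarised Cayley–Hamilton identity, using `det P = 0`).
Hence a positive semidefinite `M` with `tr (P * M) = 0` is forced to be `tr M • (1 - P)`: an
antidistinguishing POVM must be `M j = t j • (1 - P j)` with `t j ≥ 0`. Taking traces, both
`∑ t j • P j = 1` and `∑ t j • (1 - P j) = 1` force `∑ t j = 2`, so the two are equivalent.
Finally, outcome `j` occurs for some state iff `t j ≠ 0`, because `tr (P k * (1 - P j)) > 0`
whenever `P k ≠ P j`.
-/

open scoped MatrixOrder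

namespace Matrix

section PosSemidef

variable {m n 𝕜 : Type*} [Fintype m] [Fintype n] [RCLike 𝕜]

theorem PosSemidef.mul_eq_zero_of_trace_conjTranspose_mul_mul_eq_zero {M : Matrix n n 𝕜}
    (hM : M.PosSemidef) {X : Matrix n m 𝕜} (h : (Xᴴ * M * X).trace = 0) : M * X = 0 := by
  classical
  obtain ⟨B, rfl⟩ := CStarAlgebra.nonneg_iff_eq_star_mul_self.mp hM.nonneg
  have hBX : B * X = 0 := by
    rw [← trace_conjTranspose_mul_self_eq_zero_iff, conjTranspose_mul]
    simpa only [star_eq_conjTranspose, Matrix.mul_assoc] using h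
  rw [Matrix.mul_assoc, hBX, Matrix.mul_zero]

theorem trace_conjTranspose_mul_mul_of_isStarProjection {P : Matrix n n 𝕜}
    (hP : IsStarProjection P) (M : Matrix n n 𝕜) : (Pᴴ * M * P).trace = (P * M).trace := by
  rw [trace_mul_cycle, ← star_eq_conjTranspose, hP.isSelfAdjoint.star_eq, hP.isIdempotentElem.eq]

theorem trace_mul_nonneg_of_isStarProjection {P M : Matrix n n 𝕜} (hP : IsStarProjection P)
    (hM : M.PosSemidef) : 0 ≤ (P * M).trace :=
  trace_conjTranspose_mul_mul_of_isStarProjection hP M ▸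
    (hM.conjTranspose_mul_mul_same P).trace_nonneg

theorem PosSemidef.mul_eq_zero_of_trace_mul_eq_zero {P M : Matrix n n 𝕜} (hM : M.PosSemidef)
    (hP : IsStarProjection P) (h : (P * M).trace = 0) : M * P = 0 ∧ P * M = 0 := by
  have hMP : M * P = 0 := hM.mul_eq_zero_of_trace_conjTranspose_mul_mul_eq_zero
    (trace_conjTranspose_mul_mul_of_isStarProjection hP M ▸ h)
  refine ⟨hMP, ?_⟩
  rw [← hM.isHermitian.eq, ← hP.isSelfAdjoint.star_eq, star_eq_conjTranspose,
    ← conjTranspose_mul, hMP, conjTranspose_zero]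

end PosSemidef

variable {R : Type*} [CommRing R]

theorem mul_mul_eq_trace_smul_sub_det_smul_fin_two (A M : Matrix (Fin 2) (Fin 2) R) :
    A * M * A = (A * M).trace • A - A.det • (M.trace • 1 - M) := by
  ext i j
  fin_cases i <;> fin_cases j <;>
    simp [mul_apply, trace_fin_two, det_fin_two] <;> ring

theorem sum_smul_one_sub_eq_one_fin_two {ι : Type*} [Fintype ι]
    {A : ι → Matrix (Fin 2) (Fin 2) R} (hA : ∀ j, (A j).trace = 1) {c : ι → R}
    (h : ∑ j, c j • A j = 1) : ∑ j, c j • (1 - A j) = 1 := by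
  have hc : ∑ j, c j = 2 := by
    simpa [trace_sum, hA] using congrArg trace h
  simp only [smul_sub, Finset.sum_sub_distrib, ← Finset.sum_smul, hc, h]
  rw [two_smul, add_sub_cancel_right]

end Matrix

namespace IsPureState

variable {P Q M : Matrix (Fin 2) (Fin 2) ℂ}

theorem isStarProjection (hP : IsPureState P) : IsStarProjection P :=
  ⟨hP.2.1, hP.1⟩

theorem posSemidef (hP : IsPureState P) : P.PosSemidef :=
  hP.isStarProjection.nonneg.posSemidef

theorem one_sub (hP : IsPureState P) : IsPureState (1 - P) := by
  have h := hP.isStarProjection.one_sub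
  refine ⟨h.isSelfAdjoint, h.isIdempotentElem, ?_⟩
  rw [trace_sub, trace_one, hP.2.2]
  norm_num

theorem det_eq_zero (hP : IsPureState P) : P.det = 0 := by
  have h := mul_mul_eq_trace_smul_sub_det_smul_fin_two P 1
  rw [mul_one, hP.2.1, hP.2.2, one_smul, eq_comm, sub_eq_self, trace_one, Fintype.card_fin,
    Nat.cast_ofNat, two_smul, add_sub_cancel_right, smul_eq_zero] at h
  exact h.resolve_right one_ne_zero

theorem mul_mul_self_eq_trace_smul (hP : IsPureState P) (M : Matrix (Fin 2) (Fin 2) ℂ) :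
    P * M * P = (P * M).trace • P := by
  rw [mul_mul_eq_trace_smul_sub_det_smul_fin_two, hP.det_eq_zero, zero_smul, sub_zero]

theorem eq_trace_smul_one_sub_of_trace_mul_eq_zero (hP : IsPureState P) (hM : M.PosSemidef)
    (h : (P * M).trace = 0) : M = M.trace • (1 - P) := by
  obtain ⟨hMP, hPM⟩ := hM.mul_eq_zero_of_trace_mul_eq_zero hP.isStarProjection h
  have hM' : (1 - P) * M * (1 - P) = M := by
    simp only [sub_mul, mul_sub, one_mul, mul_one, hMP, hPM, sub_zero]
  have htr : ((1 - P) * M).trace = M.trace := by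
    rw [sub_mul, one_mul, hPM, sub_zero]
  rw [← htr, ← hP.one_sub.mul_mul_self_eq_trace_smul, hM']

theorem trace_mul_one_sub_pos (hP : IsPureState P) (hQ : IsPureState Q) (hPQ : P ≠ Q) :
    0 < (P * (1 - Q)).trace := by
  refine (trace_mul_nonneg_of_isStarProjection hP.isStarProjection hQ.one_sub.posSemidef).lt_of_ne'
    fun h => hPQ ?_
  have h1 := hP.eq_trace_smul_one_sub_of_trace_mul_eq_zero hQ.one_sub.posSemidef h
  rwa [hQ.one_sub.2.2, one_smul, sub_right_inj, eq_comm] at h1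

end IsPureState

theorem sum_trace_mul_one_sub_pos_of_ne {ι : Type*} [Fintype ι]
    {P : ι → Matrix (Fin 2) (Fin 2) ℂ} (hP : ∀ i, IsPureState (P i)) {j k : ι}
    (hkj : P k ≠ P j) : 0 < ∑ i, (P i * (1 - P j)).trace :=
  Finset.sum_pos'
    (fun i _ => trace_mul_nonneg_of_isStarProjection (hP i).isStarProjection
      (hP j).one_sub.posSemidef)
    ⟨k, Finset.mem_univ k, (hP k).trace_mul_one_sub_pos (hP j) hkj⟩

theorem Antidistinguishable.exists_pos_sum_smul_eq_one {n : ℕ}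
    {P : Fin n → Matrix (Fin 2) (Fin 2) ℂ} (hP : ∀ j, IsPureState (P j))
    (h : Antidistinguishable P) : ∃ t : Fin n → ℝ, (∀ j, 0 < t j) ∧ ∑ j, (t j : ℂ) • P j = 1 := by
  obtain ⟨M, ⟨hM, hsum⟩, hexcl⟩ := h
  have hMeq (j) : M j = (M j).trace • (1 - P j) :=
    (hP j).eq_trace_smul_one_sub_of_trace_mul_eq_zero (hM j) (hexcl j).1
  have hpos (j) : 0 < (M j).trace := (hM j).trace_nonneg.lt_of_ne' fun h0 =>
    (hexcl j).2 <| by simp [(hM j).trace_eq_zero_iff.mp h0]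
  have hre (j) : ((M j).trace.re : ℂ) = (M j).trace :=
    (Complex.eq_re_of_ofReal_le (Complex.ofReal_zero ▸ (hpos j).le)).symm
  refine ⟨fun j => (M j).trace.re, fun j => (Complex.pos_iff.mp (hpos j)).1, ?_⟩
  have hsum' : ∑ j, ((M j).trace.re : ℂ) • (1 - P j) = 1 :=
    (Finset.sum_congr rfl fun j _ => by rw [hre, ← hMeq]).trans hsum
  simpa only [sub_sub_cancel] using
    sum_smul_one_sub_eq_one_fin_two (fun j => (hP j).one_sub.2.2) hsum'

theorem antidistinguishable_of_sum_smul_eq_one {n : ℕ} (hn : 2 ≤ n)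
    {P : Fin n → Matrix (Fin 2) (Fin 2) ℂ} (hP : ∀ j, IsPureState (P j))
    (hinj : Function.Injective P) {t : Fin n → ℝ} (ht : ∀ j, 0 < t j)
    (hsum : ∑ j, (t j : ℂ) • P j = 1) : Antidistinguishable P := by
  have : Nontrivial (Fin n) := Fin.nontrivial_iff_two_le.mpr hn
  refine ⟨fun j => (t j : ℂ) • (1 - P j), ⟨fun j => ?_,
    sum_smul_one_sub_eq_one_fin_two (fun j => (hP j).2.2) hsum⟩, fun j => ⟨?_, ?_⟩⟩
  · exact (hP j).one_sub.posSemidef.smul (RCLike.ofReal_nonneg.mpr (ht j).le)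
  · rw [Matrix.mul_smul, (hP j).isStarProjection.mul_one_sub_self, smul_zero, trace_zero]
  · obtain ⟨k, hk⟩ := exists_ne j
    simp only [Matrix.mul_smul, trace_smul, smul_eq_mul, ← Finset.mul_sum]
    exact mul_ne_zero (by exact_mod_cast (ht j).ne')
      (sum_trace_mul_one_sub_pos_of_ne hP (hinj.ne hk)).ne'

/-- pairwise distinct pure qubit states (n ≥ 2) are
antidistinguishable iff ∑ t_j P_j = I for some positive reals t_j. -/
theorem qubit_antidistinguishable_iff {n : ℕ} (hn : 2 ≤ n)
    (P : Fin n → Matrix (Fin 2) (Fin 2) ℂ) (hP : ∀ j, IsPureState (P j))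
    (hinj : Function.Injective P) :
    Antidistinguishable P ↔
      ∃ t : Fin n → ℝ, (∀ j, 0 < t j) ∧ ∑ j, (t j : ℂ) • P j = 1 :=
  ⟨Antidistinguishable.exists_pos_sum_smul_eq_one hP,
    fun ⟨_, ht, hsum⟩ => antidistinguishable_of_sum_smul_eq_one hn hP hinj ht hsum⟩
end

section
/- Let r₁,…,rₙ be pairwise distinct unit vectors in ℝ³ (n ≥ 2), and for each j let P_j = (1/2)(I + r_j·σ) be the corresponding pure qubit state, where r·σ = r_x σ_x + r_y σ_y + r_z σ_z with σ_x, σ_y, σ_z the Pauli matrices. Then P₁,…,Pₙ are antidistinguishable if and only if there exist positive real numbers t₁,…,tₙ such that ∑_{j=1}^n t_j r_j = 0. -/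
open Matrix BigOperators
open scoped ComplexOrder

/-- The Pauli matrices. -/
def pauliX : Matrix (Fin 2) (Fin 2) ℂ := !![0, 1; 1, 0]
def pauliY : Matrix (Fin 2) (Fin 2) ℂ := !![0, -Complex.I; Complex.I, 0]
def pauliZ : Matrix (Fin 2) (Fin 2) ℂ := !![1, 0; 0, -1]

/-- The pure qubit state with Bloch vector r, namely (1/2)(I + r·σ). -/
noncomputable def blochState (r : Fin 3 → ℝ) : Matrix (Fin 2) (Fin 2) ℂ :=
  (1 / 2 : ℂ) • (1 + (r 0 : ℂ) • pauliX + (r 1 : ℂ) • pauliY + (r 2 : ℂ) • pauliZ)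

/-
A positive operator `M` with `tr (P_r M) = 0` is annihilated by the projection `P_r`, so it is
a nonnegative multiple of the antipodal state `P_{-r} = 1 - P_r`. Writing `P_r = (1 + r·σ)/2`,
a family `t_j P_{-r_j}` sums to the identity exactly when `∑ t_j = 2` and `∑ t_j r_j = 0`; this
gives the forward direction. Conversely, `M_j = (2 t_j / ∑ t) P_{-r_j}` is a POVM excluding each
`P_{r_j}`, and its outcome `j` occurs for every other state since
`tr (P_{r_k} P_{-r_j}) = (1 - r_k·r_j)/2 > 0` for `r_k ≠ r_j`.
-/

-- With `A = Xᴴ X` and `B = Yᴴ Y`, the trace of `A * B` is the squared Frobenius norm of `Y * Xᴴ`.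
open scoped MatrixOrder in
theorem Matrix.PosSemidef.mul_eq_zero_of_trace_mul_eq_zero_s18 {n 𝕜 : Type*} [Fintype n] [RCLike 𝕜]
    {A B : Matrix n n 𝕜} (hA : A.PosSemidef) (hB : B.PosSemidef) (h : (A * B).trace = 0) :
    A * B = 0 := by
  classical
  obtain ⟨X, rfl⟩ := CStarAlgebra.nonneg_iff_eq_star_mul_self.mp hA.nonneg
  obtain ⟨Y, rfl⟩ := CStarAlgebra.nonneg_iff_eq_star_mul_self.mp hB.nonneg
  simp only [star_eq_conjTranspose] at h ⊢
  have hYX : Y * Xᴴ = 0 := by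
    rw [← trace_conjTranspose_mul_self_eq_zero_iff, ← h, conjTranspose_mul,
      conjTranspose_conjTranspose, ← Matrix.mul_assoc, trace_mul_comm]
    simp only [Matrix.mul_assoc]
  have hXY : X * Yᴴ = 0 := by simpa using congrArg (·ᴴ) hYX
  rw [Matrix.mul_assoc, ← Matrix.mul_assoc X, hXY, Matrix.zero_mul, Matrix.mul_zero]

section UnitVectors

variable {ι : Type*} [Fintype ι] {a b : ι → ℝ}

lemma dotProduct_le_one (ha : a ⬝ᵥ a = 1) (hb : b ⬝ᵥ b = 1) : a ⬝ᵥ b ≤ 1 := by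
  have := dotProduct_self_star_nonneg (a - b)
  simp only [star_trivial, sub_dotProduct, dotProduct_sub, dotProduct_comm b a, ha, hb] at this
  linarith

lemma dotProduct_lt_one_of_ne (ha : a ⬝ᵥ a = 1) (hb : b ⬝ᵥ b = 1) (hab : a ≠ b) :
    a ⬝ᵥ b < 1 := by
  have := dotProduct_self_star_pos_iff.mpr (sub_ne_zero.mpr hab)
  simp only [star_trivial, sub_dotProduct, dotProduct_sub, dotProduct_comm b a, ha, hb] at this
  linarith

end UnitVectors

noncomputable def pauliDot : (Fin 3 → ℝ) →ₗ[ℝ] Matrix (Fin 2) (Fin 2) ℂ where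
  toFun r := r 0 • pauliX + r 1 • pauliY + r 2 • pauliZ
  map_add' a b := by simp only [Pi.add_apply, add_smul]; abel
  map_smul' c a := by simp only [Pi.smul_apply, smul_eq_mul, mul_smul, smul_add, RingHom.id_apply]

lemma pauliDot_eq (r : Fin 3 → ℝ) :
    pauliDot r = !![(r 2 : ℂ), r 0 - r 1 * Complex.I; r 0 + r 1 * Complex.I, -r 2] := by
  ext i j
  fin_cases i <;> fin_cases j <;>
    simp [pauliDot, pauliX, pauliY, pauliZ, sub_eq_add_neg, mul_comm]

lemma isHermitian_pauliDot (r : Fin 3 → ℝ) : (pauliDot r).IsHermitian := by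
  ext i j
  fin_cases i <;> fin_cases j <;> simp [pauliDot_eq, Complex.ext_iff]

lemma trace_pauliDot (r : Fin 3 → ℝ) : (pauliDot r).trace = 0 := by
  simp [pauliDot_eq, trace_fin_two]

lemma pauliDot_mul_add_mul (a b : Fin 3 → ℝ) :
    pauliDot a * pauliDot b + pauliDot b * pauliDot a = (2 * a ⬝ᵥ b) • 1 := by
  rw [pauliDot_eq, pauliDot_eq, mul_fin_two, mul_fin_two, one_fin_two]
  ext i j
  fin_cases i <;> fin_cases j <;>
    simp only [Fin.zero_eta, Fin.mk_one, Matrix.add_apply, Matrix.smul_apply, of_apply, cons_val',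
      cons_val_zero, cons_val_one, cons_val_fin_one, dotProduct, Fin.sum_univ_three,
      Complex.real_smul] <;> push_cast
  · linear_combination (-2 * a 1 * b 1 : ℂ) * Complex.I_sq
  · ring
  · ring
  · linear_combination (-2 * a 1 * b 1 : ℂ) * Complex.I_sq

lemma pauliDot_mul_self (r : Fin 3 → ℝ) : pauliDot r * pauliDot r = (r ⬝ᵥ r) • 1 := by
  have h := pauliDot_mul_add_mul r r
  rw [← two_smul ℝ, mul_smul] at h
  exact smul_right_injective _ two_ne_zero h

lemma trace_pauliDot_mul_pauliDot (a b : Fin 3 → ℝ) :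
    (pauliDot a * pauliDot b).trace = (2 * (a ⬝ᵥ b) : ℝ) := by
  have h := congrArg trace (pauliDot_mul_add_mul a b)
  rw [trace_add, trace_mul_comm (pauliDot b), trace_smul, trace_one, Fintype.card_fin,
    Complex.real_smul] at h
  push_cast at h ⊢
  linear_combination h / 2

lemma pauliDot_injective : Function.Injective pauliDot := by
  refine (injective_iff_map_eq_zero _).mpr fun w hw => ?_
  have h := pauliDot_mul_self w
  rw [hw, zero_mul, eq_comm, smul_eq_zero] at h
  exact dotProduct_self_eq_zero.mp (h.resolve_right one_ne_zero)

lemma smul_one_add_pauliDot_eq_smul_one_iff (a b : ℝ) (w : Fin 3 → ℝ) :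
    a • (1 : Matrix (Fin 2) (Fin 2) ℂ) + pauliDot w = b • 1 ↔ a = b ∧ w = 0 := by
  refine ⟨fun h => ?_, fun ⟨hab, hw⟩ => by simp [hab, hw]⟩
  obtain rfl : a = b := by simpa [trace_pauliDot] using congrArg trace h
  exact ⟨rfl, (map_eq_zero_iff _ pauliDot_injective).mp (add_eq_left.mp h)⟩

lemma blochState_eq_half_smul (r : Fin 3 → ℝ) :
    blochState r = (1 / 2 : ℝ) • (1 + pauliDot r) := by
  simp only [blochState, pauliDot, LinearMap.coe_mk, AddHom.coe_mk, ← Complex.coe_smul,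
    Complex.ofReal_div, Complex.ofReal_one, Complex.ofReal_ofNat, add_assoc]

lemma blochState_eq (r : Fin 3 → ℝ) :
    blochState r = !![(1 + (r 2 : ℂ)) / 2, (r 0 - r 1 * Complex.I) / 2;
      (r 0 + r 1 * Complex.I) / 2, (1 - (r 2 : ℂ)) / 2] := by
  rw [blochState_eq_half_smul, pauliDot_eq, one_fin_two]
  ext i j
  fin_cases i <;> fin_cases j <;>
    simp [Complex.real_smul, div_eq_inv_mul, sub_eq_add_neg, mul_add]

lemma blochState_neg (r : Fin 3 → ℝ) : blochState (-r) = 1 - blochState r := by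
  rw [blochState_eq_half_smul, blochState_eq_half_smul, map_neg]
  module

lemma isHermitian_blochState (r : Fin 3 → ℝ) : (blochState r).IsHermitian := by
  rw [blochState_eq_half_smul]
  exact (isHermitian_one.add (isHermitian_pauliDot r)).smul rfl

lemma blochState_mul_self {r : Fin 3 → ℝ} (hr : r ⬝ᵥ r = 1) :
    blochState r * blochState r = blochState r := by
  rw [blochState_eq_half_smul, smul_mul_smul_comm, add_mul, mul_add, mul_add, pauliDot_mul_self,
    hr]
  simp only [Matrix.one_mul, Matrix.mul_one, one_smul]
  module

lemma posSemidef_blochState {r : Fin 3 → ℝ} (hr : r ⬝ᵥ r = 1) : (blochState r).PosSemidef := by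
  have h := posSemidef_conjTranspose_mul_self (blochState r)
  rwa [(isHermitian_blochState r).eq, blochState_mul_self hr] at h

lemma trace_blochState_mul_blochState (a b : Fin 3 → ℝ) :
    (blochState a * blochState b).trace = ((1 + a ⬝ᵥ b) / 2 : ℝ) := by
  rw [blochState_eq_half_smul, blochState_eq_half_smul, smul_mul_smul_comm, add_mul, mul_add,
    mul_add, trace_smul, trace_add, trace_add, trace_add, trace_pauliDot_mul_pauliDot,
    Matrix.one_mul, Matrix.one_mul, Matrix.mul_one, trace_pauliDot, trace_pauliDot, trace_one,
    Fintype.card_fin, Complex.real_smul]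
  push_cast
  ring

lemma sum_smul_blochState_eq_one_iff {ι : Type*} [Fintype ι] (t : ι → ℝ) (v : ι → Fin 3 → ℝ) :
    ∑ j, t j • blochState (v j) = 1 ↔ ∑ j, t j = 2 ∧ ∑ j, t j • v j = 0 := by
  have h : ∑ j, t j • blochState (v j) =
      (2 : ℝ)⁻¹ • ((∑ j, t j) • 1 + pauliDot (∑ j, t j • v j)) := by
    simp only [blochState_eq_half_smul, one_div, map_sum, map_smul, Finset.sum_smul, smul_add,
      Finset.smul_sum, smul_comm (t _) (2⁻¹ : ℝ), Finset.sum_add_distrib]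
  rw [h, ← smul_one_add_pauliDot_eq_smul_one_iff _ 2, inv_smul_eq_iff₀ two_ne_zero]

lemma blochState_mul_mul_blochState {r : Fin 3 → ℝ} (hr : r ⬝ᵥ r = 1)
    (A : Matrix (Fin 2) (Fin 2) ℂ) :
    blochState r * A * blochState r = (blochState r * A).trace • blochState r := by
  have hr' : (r 0 : ℂ) ^ 2 + (r 1 : ℂ) ^ 2 + (r 2 : ℂ) ^ 2 = 1 := by
    simp only [dotProduct, Fin.sum_univ_three, ← sq] at hr
    exact_mod_cast hr
  rw [blochState_eq, eta_fin_two A, mul_fin_two, mul_fin_two, trace_fin_two_of]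
  ext i j
  fin_cases i <;> fin_cases j <;>
    simp only [Fin.zero_eta, Fin.mk_one, Matrix.smul_apply, of_apply, cons_val',
      cons_val_zero, cons_val_one, cons_val_fin_one, smul_eq_mul]
  · linear_combination (A 1 1 / 4) * hr' - (A 1 1 * r 1 ^ 2 / 4) * Complex.I_sq
  · linear_combination (-A 0 1 / 4) * hr' + (A 0 1 * r 1 ^ 2 / 4) * Complex.I_sq
  · linear_combination (-A 1 0 / 4) * hr' + (A 1 0 * r 1 ^ 2 / 4) * Complex.I_sq
  · linear_combination (A 0 0 / 4) * hr' - (A 0 0 * r 1 ^ 2 / 4) * Complex.I_sq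

lemma exists_eq_smul_blochState_neg {r : Fin 3 → ℝ} (hr : r ⬝ᵥ r = 1)
    {M : Matrix (Fin 2) (Fin 2) ℂ} (hM : M.PosSemidef) (h : (blochState r * M).trace = 0) :
    ∃ t : ℝ, 0 ≤ t ∧ M = t • blochState (-r) := by
  have hP := posSemidef_blochState hr
  have hPM : blochState r * M = 0 := hP.mul_eq_zero_of_trace_mul_eq_zero_s18 hM h
  have hMP : M * blochState r = 0 :=
    hM.mul_eq_zero_of_trace_mul_eq_zero_s18 hP (by rwa [trace_mul_comm])
  have hM_eq : blochState (-r) * M * blochState (-r) = M := by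
    simp only [blochState_neg, Matrix.sub_mul, Matrix.mul_sub, Matrix.one_mul, Matrix.mul_one,
      hPM, hMP, sub_zero]
  have htrace : (blochState (-r) * M).trace = M.trace := by
    rw [blochState_neg, Matrix.sub_mul, trace_sub, hPM, Matrix.one_mul, trace_zero, sub_zero]
  obtain ⟨t, ht, htM⟩ := RCLike.nonneg_iff_exists_ofReal.mp hM.trace_nonneg
  refine ⟨t, ht, ?_⟩
  rw [← Complex.coe_smul]
  calc M = blochState (-r) * M * blochState (-r) := hM_eq.symm
    _ = M.trace • blochState (-r) := by
      rw [blochState_mul_mul_blochState (by simpa using hr), htrace]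
    _ = (t : ℂ) • blochState (-r) := by rw [← htM]; rfl

theorem antidistinguishable_blochState_of_sum_smul_eq_zero {n : ℕ} (hn : 2 ≤ n)
    {r : Fin n → Fin 3 → ℝ} (hr : ∀ j, r j ⬝ᵥ r j = 1) (hinj : Function.Injective r)
    {t : Fin n → ℝ} (ht : ∀ j, 0 < t j) (hsum : ∑ j, t j • r j = 0) :
    Antidistinguishable (fun j => blochState (r j)) := by
  set s := ∑ j, t j
  have hs : 0 < s := Finset.sum_pos (fun j _ => ht j) ⟨⟨0, by omega⟩, Finset.mem_univ _⟩
  set c : Fin n → ℝ := fun j => 2 / s * t j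
  have hc : ∀ j, 0 < c j := fun j => mul_pos (div_pos two_pos hs) (ht j)
  refine ⟨fun j => c j • blochState (-r j), ⟨fun j => ?_, ?_⟩, fun j => ⟨?_, ?_⟩⟩
  · exact (posSemidef_blochState (by simpa using hr j)).smul (hc j).le
  · rw [sum_smul_blochState_eq_one_iff]
    refine ⟨(Finset.mul_sum _ _ _).symm.trans (div_mul_cancel₀ 2 hs.ne'), ?_⟩
    simp only [c, smul_neg, Finset.sum_neg_distrib, mul_smul, ← Finset.smul_sum, hsum, smul_zero,
      neg_zero]
  · simp [trace_smul, trace_blochState_mul_blochState, hr j]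
  · have hpos : 0 < ∑ k, (1 - r k ⬝ᵥ r j) / 2 := by
      obtain ⟨k, hk⟩ := Fintype.exists_ne_of_one_lt_card (by rw [Fintype.card_fin]; omega) j
      refine Finset.sum_pos' (fun k _ => ?_) ⟨k, Finset.mem_univ _, ?_⟩
      · linarith [dotProduct_le_one (hr k) (hr j)]
      · linarith [dotProduct_lt_one_of_ne (hr k) (hr j) (hinj.ne hk)]
    simp only [Matrix.mul_smul, trace_smul, trace_blochState_mul_blochState, dotProduct_neg,
      ← sub_eq_add_neg, Complex.real_smul, ← Complex.ofReal_mul, ← Complex.ofReal_sum,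
      ← Finset.mul_sum, Complex.ofReal_ne_zero]
    exact (mul_pos (hc j) hpos).ne'

/-- the pure qubit states with pairwise distinct unit Bloch vectors
r₁,…,rₙ (n ≥ 2) are antidistinguishable iff ∑ t_j r_j = 0 for some positive reals t_j. -/
theorem bloch_antidistinguishable_iff {n : ℕ} (hn : 2 ≤ n)
    (r : Fin n → (Fin 3 → ℝ)) (hunit : ∀ j, (r j 0) ^ 2 + (r j 1) ^ 2 + (r j 2) ^ 2 = 1)
    (hinj : Function.Injective r) :
    Antidistinguishable (fun j => blochState (r j)) ↔
      ∃ t : Fin n → ℝ, (∀ j, 0 < t j) ∧ ∑ j, t j • r j = 0 := by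
  have hr (j : Fin n) : r j ⬝ᵥ r j = 1 := by
    simpa [dotProduct, Fin.sum_univ_three, sq] using hunit j
  refine ⟨fun ⟨M, ⟨hpsd, hsum⟩, hM⟩ => ?_, fun ⟨t, ht, hsum⟩ =>
    antidistinguishable_blochState_of_sum_smul_eq_zero hn hr hinj ht hsum⟩
  choose t ht hMt using fun j => exists_eq_smul_blochState_neg (hr j) (hpsd j) (hM j).1
  have hpos (j : Fin n) : 0 < t j :=
    (ht j).lt_of_ne fun h0 => (hM j).2 (by simp [hMt j, ← h0])
  rw [funext hMt, sum_smul_blochState_eq_one_iff] at hsum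
  exact ⟨t, hpos, by simpa using hsum.2⟩
end
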